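/- arXiv:1408.5045 — 4 statements merged into one kernel-verified Lean document; each statement's English description precedes it below -/
import Mathlib

section
/- Let v be a place of a number field K, with Ω_v the completion of an algebraic closure of K_v, and let |·|_v be its normalized absolute value. For α ∈ Ω_v and an integer N ≥ 1, define U_v(N, α, 1) = inf{ν_v(1 − f) : f ∈ Ω_v[x], f(α) = 0, deg f ≤ N}, where ν_v(g) = log sup{|g(z)|_v : |z|_v = 1}. Then U_v(N, α, 1) = −N·log⁺|α|_v. -/
open Polynomial

section Aux
variable {Ω : Type*} [NontriviallyNormedField Ω] [IsAlgClosed Ω]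

lemma exists_unit_far [IsUltrametricDist Ω] (s : Finset Ω) (hs : ∀ x ∈ s, ‖x‖ ≤ 1) :
    ∃ z : Ω, ‖z‖ = 1 ∧ ∀ x ∈ s, ‖z - x‖ = 1 := by
  classical
  set q : Polynomial Ω := X * ∏ x ∈ s, (X - C x) with hq
  have hmon : q.Monic := monic_X.mul (monic_prod_of_monic _ _ fun x _ => monic_X_sub_C x)
  have hqdeg : q.natDegree = s.card + 1 := by
    rw [hq, Monic.natDegree_mul monic_X (monic_prod_of_monic _ _ fun x _ => monic_X_sub_C x),
      natDegree_X, natDegree_prod _ _ fun x _ => X_sub_C_ne_zero x]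
    simp [add_comm]
  have hdeg : (q - 1).degree ≠ 0 := by
    rw [degree_sub_eq_left_of_degree_lt ?_]
    · rw [hmon.ne_zero |> degree_eq_natDegree, hqdeg]
      exact_mod_cast Nat.succ_ne_zero s.card
    · rw [degree_one, hmon.ne_zero |> degree_eq_natDegree, hqdeg]
      exact_mod_cast Nat.succ_pos s.card
  obtain ⟨z, hz⟩ := IsAlgClosed.exists_root _ hdeg
  have h1 : z * ∏ x ∈ s, (z - x) = 1 := by
    have := hz
    simp only [IsRoot, hq, eval_sub, eval_one, eval_mul, eval_prod, eval_X, eval_C,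
      sub_eq_zero] at this
    exact this
  have hn : ‖z‖ * ∏ x ∈ s, ‖z - x‖ = 1 := by
    rw [← norm_prod, ← norm_mul, h1, norm_one]
  have hz1 : ‖z‖ ≤ 1 := by
    by_contra hgt
    push_neg at hgt
    have hx : ∀ x ∈ s, ‖z - x‖ = ‖z‖ := by
      intro x hx
      have hne : ‖z‖ ≠ ‖-x‖ := by
        rw [norm_neg]; exact ne_of_gt (lt_of_le_of_lt (hs x hx) hgt)
      rw [sub_eq_add_neg, IsUltrametricDist.norm_add_eq_max_of_norm_ne_norm hne, norm_neg]
      exact max_eq_left (le_of_lt (lt_of_le_of_lt (hs x hx) hgt))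
    rw [Finset.prod_congr rfl hx, Finset.prod_const] at hn
    have h2 : (1:ℝ) ≤ ‖z‖ ^ s.card := one_le_pow₀ hgt.le
    nlinarith
  have hfac : ∀ x ∈ s, ‖z - x‖ ≤ 1 := by
    intro x hx
    rw [sub_eq_add_neg]
    exact (IsUltrametricDist.norm_add_le_max z (-x)).trans
      (max_le hz1 (by rw [norm_neg]; exact hs x hx))
  have hP : ∏ x ∈ s, ‖z - x‖ ≤ 1 := Finset.prod_le_one (fun _ _ => norm_nonneg _) hfac
  have hzn : ‖z‖ = 1 := by
    have : (1:ℝ) ≤ ‖z‖ := by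
      calc (1:ℝ) = ‖z‖ * ∏ x ∈ s, ‖z - x‖ := hn.symm
        _ ≤ ‖z‖ := mul_le_of_le_one_right (norm_nonneg _) hP
    exact le_antisymm hz1 this
  refine ⟨z, hzn, fun x hx => ?_⟩
  have hrest : ∏ y ∈ s.erase x, ‖z - y‖ ≤ 1 :=
    Finset.prod_le_one (fun _ _ => norm_nonneg _) (fun y hy => hfac y (Finset.mem_of_mem_erase hy))
  have h3 : ‖z - x‖ * (‖z‖ * ∏ y ∈ s.erase x, ‖z - y‖) = 1 := by
    rw [← hn, ← Finset.mul_prod_erase _ _ hx]; ring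
  have h4 : ‖z‖ * ∏ y ∈ s.erase x, ‖z - y‖ ≤ 1 := mul_le_one₀ hz1
    (Finset.prod_nonneg fun _ _ => norm_nonneg _) hrest
  have : (1:ℝ) ≤ ‖z - x‖ := by
    calc (1:ℝ) = ‖z - x‖ * (‖z‖ * ∏ y ∈ s.erase x, ‖z - y‖) := h3.symm
      _ ≤ ‖z - x‖ := mul_le_of_le_one_right (norm_nonneg _) h4
  exact le_antisymm (hfac x hx) this


lemma exists_sep [IsUltrametricDist Ω] (n : ℕ) :
    ∃ t : Finset Ω, t.card = n ∧ (∀ x ∈ t, ‖x‖ = 1) ∧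
      ∀ x ∈ t, ∀ y ∈ t, x ≠ y → ‖x - y‖ = 1 := by
  classical
  induction n with
  | zero => exact ⟨∅, rfl, by simp, by simp⟩
  | succ n ih =>
    obtain ⟨t, hc, h1, h2⟩ := ih
    obtain ⟨z, hz1, hz2⟩ := exists_unit_far t (fun x hx => (h1 x hx).le)
    have hzt : z ∉ t := fun h => by simpa using hz2 z h
    refine ⟨insert z t, by rw [Finset.card_insert_of_notMem hzt, hc], ?_, ?_⟩
    · intro x hx
      rcases Finset.mem_insert.mp hx with rfl | hx
      · exact hz1
      · exact h1 x hx
    · intro x hx y hy hxy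
      rcases Finset.mem_insert.mp hx with rfl | hx'
      · rcases Finset.mem_insert.mp hy with rfl | hy'
        · exact absurd rfl hxy
        · exact hz2 y hy'
      · rcases Finset.mem_insert.mp hy with rfl | hy'
        · rw [norm_sub_rev]; exact hz2 x hx'
        · exact h2 x hx' y hy' hxy


lemma exists_unit_norm_eval_ge
    (hΩ : IsUltrametricDist Ω ∨ ∃ j : Ω ≃+* ℂ, ∀ x : Ω, ‖j x‖ = ‖x‖)
    (h : Polynomial Ω) (β : Ω) (hβ : ‖β‖ ≤ 1) :
    ∃ z : Ω, ‖z‖ = 1 ∧ ‖h.eval β‖ ≤ ‖h.eval z‖ := by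
  classical
  rcases hΩ with hu | ⟨j, hj⟩
  · -- ultrametric case, via Lagrange interpolation
    obtain ⟨t, hc, h1, h2⟩ := exists_sep (Ω := Ω) (h.natDegree + 1)
    have hinj : Set.InjOn (id : Ω → Ω) t := Set.injOn_id _
    have hdeg : h.degree < t.card := by
      rw [hc]
      exact lt_of_le_of_lt degree_le_natDegree (by exact_mod_cast lt_add_one _)
    have hrep := Lagrange.eq_interpolate hinj hdeg
    have hev : h.eval β = ∑ i ∈ t, h.eval i * (Lagrange.basis t id i).eval β := by
      conv_lhs => rw [hrep]
      rw [Lagrange.interpolate_apply, eval_finset_sum]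
      simp
    have ht : t.Nonempty := Finset.card_pos.mp (by rw [hc]; omega)
    obtain ⟨i, hi, hle⟩ := IsUltrametricDist.exists_norm_finset_sum_le_of_nonempty ht
      (fun i => h.eval i * (Lagrange.basis t id i).eval β)
    refine ⟨i, h1 i hi, ?_⟩
    rw [hev]
    refine hle.trans ?_
    rw [norm_mul]
    have hbasis : ‖(Lagrange.basis t id i).eval β‖ ≤ 1 := by
      rw [Lagrange.basis, eval_prod, norm_prod]
      refine Finset.prod_le_one (fun _ _ => norm_nonneg _) ?_
      intro j hj
      obtain ⟨hjne, hjt⟩ := Finset.mem_erase.mp hj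
      have hij : ‖(i : Ω) - j‖ = 1 := h2 i hi j hjt (Ne.symm hjne)
      have hbj : ‖β - j‖ ≤ 1 := by
        rw [sub_eq_add_neg]
        exact (IsUltrametricDist.norm_add_le_max β (-j)).trans
          (max_le hβ (by rw [norm_neg]; exact (h1 j hjt).le))
      simp only [Lagrange.basisDivisor, eval_mul, eval_C, eval_sub, eval_X, norm_mul, norm_inv,
        id_eq, hij, inv_one, one_mul]
      exact hbj
    exact mul_le_of_le_one_right (norm_nonneg _) hbasis
  · -- archimedean case: Ω ≅ ℂ, use the maximum modulus principle
    set F : Polynomial ℂ := h.map (j : Ω →+* ℂ) with hF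
    have hkey : ∀ x : Ω, ‖h.eval x‖ = ‖F.eval (j x)‖ := by
      intro x
      rw [hF, eval_map]
      rw [show (j x) = ((j : Ω →+* ℂ) x) from rfl, Polynomial.eval₂_at_apply]
      exact (hj _).symm
    obtain ⟨z₀, hz₀m, hz₀⟩ := (isCompact_sphere (0:ℂ) 1).exists_isMaxOn
      ⟨1, by simp⟩ ((F.continuous.norm).continuousOn)
    refine ⟨j.symm z₀, ?_, ?_⟩
    · rw [← hj (j.symm z₀), RingEquiv.apply_symm_apply]
      simpa [mem_sphere_iff_norm] using hz₀m
    · rw [hkey β, hkey (j.symm z₀), RingEquiv.apply_symm_apply]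
      have hmem : j β ∈ closure (Metric.ball (0:ℂ) 1) := by
        rw [closure_ball (0:ℂ) one_ne_zero]
        simpa [mem_closedBall_iff_norm, hj] using hβ
      exact Complex.norm_le_of_forall_mem_frontier_norm_le Metric.isBounded_ball
        (F.differentiable.diffContOnCl)
        (fun z hz => hz₀ (by rwa [frontier_ball (0:ℂ) one_ne_zero] at hz)) hmem


end Aux

/-- `Ω` models the completion `Ω_v` of an algebraic closure of the completion `K_v` of a
number field at a place `v`: it is complete, algebraically closed, and either
non-Archimedean or isometric to `ℂ`.  The normalized absolute value of the place is
`|x|_v = ‖x‖ ^ e` where `e = [K_v : ℚ_p]/[K : ℚ]`.  For `N ≥ 1` and `α ∈ Ω_v`,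
`U_v(N, α, 1) = inf{ν_v(1 - f) : f(α) = 0, deg f ≤ N}` equals `-N·log⁺|α|_v`. -/
theorem U_one_eq_neg_N_logPlus
    {Ω : Type*} [NontriviallyNormedField Ω] [CompleteSpace Ω] [IsAlgClosed Ω]
    (hΩ : IsUltrametricDist Ω ∨ ∃ j : Ω ≃+* ℂ, ∀ x : Ω, ‖j x‖ = ‖x‖)
    (e : ℝ) (he : 0 < e) (he1 : e ≤ 1)
    (N : ℕ) (hN : 1 ≤ N) (α : Ω) :
    sInf {x : ℝ | ∃ f : Polynomial Ω, f.eval α = 0 ∧ f.natDegree ≤ N ∧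
        x = Real.log (sSup ((fun z => ‖(1 - f).eval z‖ ^ e) '' {z : Ω | ‖z‖ = 1}))} =
      -(N : ℝ) * Real.log (max 1 (‖α‖ ^ e)) := by
  classical
  have hsphere : ({z : Ω | ‖z‖ = 1} : Set Ω).Nonempty := ⟨1, norm_one⟩
  set S : Set ℝ := {x : ℝ | ∃ f : Polynomial Ω, f.eval α = 0 ∧ f.natDegree ≤ N ∧
      x = Real.log (sSup ((fun z => ‖(1 - f).eval z‖ ^ e) '' {z : Ω | ‖z‖ = 1}))} with hS
  set A : ℝ := max 1 ‖α‖ with hA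
  have hA1 : 1 ≤ A := le_max_left _ _
  have hA0 : (0:ℝ) < A := lt_of_lt_of_le zero_lt_one hA1
  set r₀ : ℝ := -(N : ℝ) * (e * Real.log A) with hr₀
  have hRHS : -(N : ℝ) * Real.log (max 1 (‖α‖ ^ e)) = r₀ := by
    have hAe : max 1 (‖α‖ ^ e) = A ^ e := by
      rcases le_total ‖α‖ 1 with h | h
      · rw [max_eq_left (Real.rpow_le_one (norm_nonneg _) h he.le), hA, max_eq_left h,
          Real.one_rpow]
      · have h1 : (1:ℝ) ≤ ‖α‖ ^ e := by
          calc (1:ℝ) = 1 ^ e := (Real.one_rpow e).symm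
            _ ≤ ‖α‖ ^ e := Real.rpow_le_rpow zero_le_one h he.le
        rw [max_eq_right h1, hA, max_eq_right h]
    rw [hAe, Real.log_rpow hA0, hr₀]
  rw [hRHS]
  -- membership of `r₀` in `S`
  have hmem : r₀ ∈ S := by
    rcases le_or_gt ‖α‖ 1 with hα | hα
    · have hA' : A = 1 := max_eq_left hα
      refine ⟨0, by simp, by simpa using Nat.zero_le N, ?_⟩
      have himg : (fun z : Ω => ‖(1 - (0 : Polynomial Ω)).eval z‖ ^ e) '' {z : Ω | ‖z‖ = 1}
          = {1} := by
        ext y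
        constructor
        · rintro ⟨z, hz, rfl⟩; simp
        · rintro rfl; exact ⟨1, norm_one, by simp⟩
      rw [himg, csSup_singleton, Real.log_one, hr₀, hA', Real.log_one]
      ring
    · have hA' : A = ‖α‖ := max_eq_right hα.le
      have hαne : α ≠ 0 := by
        intro h; rw [h, norm_zero] at hα; linarith
      refine ⟨1 - C (α⁻¹ ^ N) * X ^ N, ?_, ?_, ?_⟩
      · simp [inv_pow, inv_mul_cancel₀ (pow_ne_zero N hαne)]
      · refine (natDegree_sub_le _ _).trans (max_le (by simp) ?_)
        exact (natDegree_C_mul_le _ _).trans_eq (natDegree_X_pow N)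
      · rw [sub_sub_cancel]
        have himg : (fun z : Ω => ‖(C (α⁻¹ ^ N) * X ^ N : Polynomial Ω).eval z‖ ^ e) ''
            {z : Ω | ‖z‖ = 1} = {((‖α‖ ^ N)⁻¹) ^ e} := by
          ext y
          constructor
          · rintro ⟨z, hz, rfl⟩
            have hz1 : ‖z‖ = 1 := hz
            simp [norm_mul, norm_pow, norm_inv, hz1]
          · rintro rfl
            exact ⟨1, norm_one, by simp [norm_mul, norm_pow, norm_inv]⟩
        rw [himg, csSup_singleton]
        have hpos : (0:ℝ) < (‖α‖ ^ N)⁻¹ := inv_pos.mpr (pow_pos (by linarith) N)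
        rw [Real.log_rpow hpos, Real.log_inv, Real.log_pow, hr₀, hA']
        ring
  -- lower bound
  have hlow : ∀ x ∈ S, r₀ ≤ x := by
    rintro x ⟨f, hf0, hfd, rfl⟩
    set g : Polynomial Ω := 1 - f with hg
    have hge : g.eval α = 1 := by simp [hg, hf0]
    have hgd : g.natDegree ≤ N :=
      (natDegree_sub_le _ _).trans (max_le (by simp) hfd)
    -- find a unit point where `g` is large
    obtain ⟨w, hw1, hw2⟩ : ∃ w : Ω, ‖w‖ = 1 ∧ (A ^ N)⁻¹ ≤ ‖g.eval w‖ := by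
      rcases le_or_gt ‖α‖ 1 with hα | hα
      · have hA' : A = 1 := max_eq_left hα
        obtain ⟨z, hz1, hz2⟩ := exists_unit_norm_eval_ge hΩ g α hα
        refine ⟨z, hz1, ?_⟩
        rw [hA', one_pow, inv_one]
        simpa [hge] using hz2
      · have hA' : A = ‖α‖ := max_eq_right hα.le
        have hαne : α ≠ 0 := by intro h; rw [h, norm_zero] at hα; linarith
        have hβ : ‖α⁻¹‖ ≤ 1 := by
          rw [norm_inv]
          exact inv_le_one_of_one_le₀ hα.le
        obtain ⟨z, hz1, hz2⟩ := exists_unit_norm_eval_ge hΩ (reflect N g) α⁻¹ hβ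
        have hzne : z ≠ 0 := by intro h; rw [h, norm_zero] at hz1; norm_num at hz1
        -- norms via the reflection identity
        letI : Invertible α := invertibleOfNonzero hαne
        have hα' : (reflect N g).eval α⁻¹ * α ^ N = g.eval α := by
          have := eval₂_reflect_mul_pow (RingHom.id Ω) α N g hgd
          simpa [invOf_eq_inv] using this
        letI : Invertible (z⁻¹) := invertibleOfNonzero (inv_ne_zero hzne)
        have hz' : (reflect N g).eval z * (z⁻¹) ^ N = g.eval z⁻¹ := by
          have := eval₂_reflect_mul_pow (RingHom.id Ω) z⁻¹ N g hgd
          simpa [invOf_eq_inv, inv_inv] using this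
        refine ⟨z⁻¹, by rw [norm_inv, hz1, inv_one], ?_⟩
        have h1 : ‖(reflect N g).eval α⁻¹‖ = (‖α‖ ^ N)⁻¹ := by
          have : ‖(reflect N g).eval α⁻¹‖ * ‖α‖ ^ N = 1 := by
            rw [← norm_pow, ← norm_mul, hα', hge, norm_one]
          field_simp at this ⊢
          linarith [this]
        have h2 : ‖g.eval z⁻¹‖ = ‖(reflect N g).eval z‖ := by
          rw [← hz', norm_mul, norm_pow, norm_inv, hz1]
          simp
        rw [h2, hA', ← h1]
        exact hz2
    -- bound the sup from below
    set T : Set ℝ := (fun z : Ω => ‖g.eval z‖ ^ e) '' {z : Ω | ‖z‖ = 1} with hT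
    have hbdd : BddAbove T := by
      refine ⟨(∑ i ∈ Finset.range (g.natDegree + 1), ‖g.coeff i‖) ^ e, ?_⟩
      rintro y ⟨z, hz, rfl⟩
      have hz1 : ‖z‖ = 1 := hz
      have hbound : ‖g.eval z‖ ≤ ∑ i ∈ Finset.range (g.natDegree + 1), ‖g.coeff i‖ := by
        rw [eval_eq_sum_range]
        refine (norm_sum_le _ _).trans (Finset.sum_le_sum fun i _ => ?_)
        rw [norm_mul, norm_pow, hz1, one_pow, mul_one]
      exact Real.rpow_le_rpow (norm_nonneg _) hbound he.le
    have hTmem : ‖g.eval w‖ ^ e ∈ T := ⟨w, hw1, rfl⟩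
    have hssup : ((A ^ N)⁻¹) ^ e ≤ sSup T := by
      refine le_trans ?_ (le_csSup hbdd hTmem)
      exact Real.rpow_le_rpow (by positivity) hw2 he.le
    have hpos : (0:ℝ) < ((A ^ N)⁻¹) ^ e :=
      Real.rpow_pos_of_pos (inv_pos.mpr (pow_pos hA0 N)) e
    have := Real.log_le_log hpos hssup
    rw [Real.log_rpow (inv_pos.mpr (pow_pos hA0 N)), Real.log_inv, Real.log_pow] at this
    calc r₀ = e * -(↑N * Real.log A) := by rw [hr₀]; ring
      _ ≤ Real.log (sSup T) := this
  exact le_antisymm (csInf_le ⟨r₀, fun x hx => hlow x hx⟩ hmem) (le_csInf ⟨r₀, hmem⟩ hlow)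
end

section
/- Let v be a place of a number field K and Ω_v the completion of an algebraic closure of K_v. Let N be an integer, α ∈ Ω_v, and T ∈ Ω_v[x] with deg T ≤ N. Define U_v(N, α, T) = inf{ν_v(T − f) : f ∈ Ω_v[x], f(α) = 0, deg f ≤ N}. Then U_v(N, α, T) = log|T(α)|_v − N·log⁺|α|_v (with both sides equal to −∞ if T(α) = 0). -/
open Polynomial

/-! The infimum is attained: for `‖α‖ ≤ 1` by `f = T - T(α)`, otherwise by
`f = T - (T(α) / α ^ N) X ^ N`; either way `T - f` is a monomial of constant modulus
`‖T(α)‖ / max 1 ‖α‖ ^ N` on the unit circle. Conversely, `g = T - f` has `g(α) = T(α)` and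
degree `≤ N`, so it suffices that `‖g(β)‖ ≤ max 1 ‖β‖ ^ N * sup_{‖z‖ = 1} ‖g(z)‖` for all `β`.
Over `ℂ` this is the maximum modulus principle, applied to `g` and to its reflection
`X ^ N g(1 / X)`. In the ultrametric case write `g = c ∏ (X - r)` and pick `‖z‖ = 1` with
`max 1 ‖r‖ ≤ ‖z - r‖` for every root `r`: a root `z` of `X ∏_{‖r‖ ≤ 1} (X - r) - 1` works, since
a product of factors of norm `≤ 1` can only equal `1` if every factor has norm `1`. -/

/-- Extended-real logarithm: `⊥` on nonpositive reals. -/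
noncomputable def elog (x : ℝ) : EReal := if x ≤ 0 then ⊥ else (Real.log x : EReal)

/-- The logarithmic local supremum norm (w.r.t. the normalized absolute value
`|x|_v = ‖x‖ ^ e`) of a polynomial on the unit circle, valued in `EReal`. -/
noncomputable def nuv {Ω : Type*} [NormedField Ω] (e : ℝ) (g : Polynomial Ω) : EReal :=
  elog (sSup ((fun z => ‖g.eval z‖ ^ e) '' {z : Ω | ‖z‖ = 1}))

theorem IsAlgClosed.exists_mul_multiset_prod_sub_eq_one {K : Type*} [Field K] [IsAlgClosed K]
    (s : Multiset K) : ∃ z : K, z * (s.map (z - ·)).prod = 1 := by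
  have hP : (X * (s.map (X - C ·)).prod - C 1).natDegree = s.card + 1 := by
    rw [natDegree_sub_C, natDegree_mul X_ne_zero
      (monic_multiset_prod_of_monic _ _ fun r _ => monic_X_sub_C r).ne_zero,
      natDegree_multiset_prod_X_sub_C_eq_card, natDegree_X, add_comm]
  obtain ⟨z, hz⟩ := IsAlgClosed.exists_root _
    (degree_ne_of_natDegree_ne (hP.trans_ne s.card.succ_ne_zero))
  exact ⟨z, by simpa [eval_multiset_prod, sub_eq_zero] using hz⟩

lemma Multiset.eq_one_of_prod_eq_one {s : Multiset ℝ} (h0 : ∀ x ∈ s, 0 ≤ x)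
    (h1 : ∀ x ∈ s, x ≤ 1) (hs : s.prod = 1) : ∀ x ∈ s, x = 1 := by
  intro x hx
  rw [← cons_erase hx, prod_cons] at hs
  have hrest : ((s.erase x).map id).prod ≤ ((s.erase x).map fun _ => (1 : ℝ)).prod :=
    prod_map_le_prod_map₀ _ _ (fun y hy => h0 y (mem_of_mem_erase hy))
      fun y hy => h1 y (mem_of_mem_erase hy)
  rw [map_id, map_const', prod_replicate, one_pow] at hrest
  have hrest0 : 0 ≤ (s.erase x).prod := prod_nonneg fun y hy => h0 y (mem_of_mem_erase hy)
  nlinarith [h0 x hx, h1 x hx]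

lemma norm_multiset_prod {K : Type*} [NormedField K] (s : Multiset K) :
    ‖s.prod‖ = (s.map (‖·‖)).prod := by
  simpa using map_multiset_prod (normHom : K →*₀ ℝ) s

def UnitSphereBoundsEval (K : Type*) [NormedField K] : Prop :=
  ∀ (N : ℕ) (g : K[X]), g.natDegree ≤ N → ∀ β : K,
    ∃ z : K, ‖z‖ = 1 ∧ ‖g.eval β‖ ≤ ‖g.eval z‖ * max 1 ‖β‖ ^ N

section Ultrametric

variable {K : Type*} [NormedField K] [IsUltrametricDist K]

lemma IsUltrametricDist.norm_sub_le_max (x y : K) : ‖x - y‖ ≤ max ‖x‖ ‖y‖ := by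
  simpa [sub_eq_add_neg] using IsUltrametricDist.norm_add_le_max x (-y)

theorem IsUltrametricDist.exists_norm_eq_one_forall_one_le_norm_sub [IsAlgClosed K]
    (s : Multiset K) (hs : ∀ r ∈ s, ‖r‖ ≤ 1) : ∃ z : K, ‖z‖ = 1 ∧ ∀ r ∈ s, 1 ≤ ‖z - r‖ := by
  obtain ⟨z, hz⟩ := IsAlgClosed.exists_mul_multiset_prod_sub_eq_one s
  have hprod : (‖z‖ ::ₘ s.map (‖z - ·‖)).prod = 1 := by
    simpa [norm_multiset_prod, Function.comp_def] using congrArg (‖·‖) hz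
  have hz1 : ‖z‖ ≤ 1 := by
    by_contra! hz1
    have hfac : ∀ r ∈ s, 1 ≤ ‖z - r‖ := fun r hr => by
      have := IsUltrametricDist.norm_add_le_max (z - r) r
      rw [sub_add_cancel] at this
      linarith [(le_max_iff.mp this).resolve_right fun h => by linarith [hs r hr]]
    have := Multiset.one_le_prod_map hfac
    rw [Multiset.prod_cons] at hprod
    nlinarith
  have hle : ∀ x ∈ ‖z‖ ::ₘ s.map (‖z - ·‖), x ≤ 1 := by
    simp only [Multiset.mem_cons, Multiset.mem_map]
    rintro _ (rfl | ⟨r, hr, rfl⟩)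
    · exact hz1
    · exact (norm_sub_le_max z r).trans (max_le hz1 (hs r hr))
  have heq := Multiset.eq_one_of_prod_eq_one (by simp) hle hprod
  exact ⟨z, heq _ (Multiset.mem_cons_self _ _), fun r hr =>
    (heq _ (Multiset.mem_cons_of_mem (Multiset.mem_map_of_mem _ hr))).ge⟩

lemma IsUltrametricDist.norm_sub_le_max_one_mul_max_one (x y : K) :
    ‖x - y‖ ≤ max 1 ‖x‖ * max 1 ‖y‖ := by
  refine (norm_sub_le_max x y).trans (max_le ?_ ?_)
  · exact (le_max_right _ _).trans (le_mul_of_one_le_right (by positivity) (le_max_left _ _))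
  · exact (le_max_right _ _).trans (le_mul_of_one_le_left (by positivity) (le_max_left _ _))

theorem IsUltrametricDist.exists_norm_eq_one_forall_max_one_le_norm_sub [IsAlgClosed K]
    (s : Multiset K) : ∃ z : K, ‖z‖ = 1 ∧ ∀ r ∈ s, max 1 ‖r‖ ≤ ‖z - r‖ := by
  obtain ⟨z, hz, hsmall⟩ := exists_norm_eq_one_forall_one_le_norm_sub (s.filter (‖·‖ ≤ 1))
    fun r hr => (Multiset.mem_filter.1 hr).2
  refine ⟨z, hz, fun r hr => ?_⟩
  by_cases hr1 : ‖r‖ ≤ 1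
  · exact (max_eq_left hr1).trans_le (hsmall r (Multiset.mem_filter.2 ⟨hr, hr1⟩))
  · have := IsUltrametricDist.norm_add_le_max (r - z) z
    rw [sub_add_cancel, norm_sub_rev, hz] at this
    have hzr := (le_max_iff.1 this).resolve_right hr1
    exact max_le (by linarith [not_le.1 hr1]) hzr

theorem IsUltrametricDist.unitSphereBoundsEval [IsAlgClosed K] : UnitSphereBoundsEval K := by
  intro N g hg β
  obtain ⟨z, hz, hroots⟩ := exists_norm_eq_one_forall_max_one_le_norm_sub g.roots
  refine ⟨z, hz, ?_⟩
  have hsplit := IsAlgClosed.splits g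
  rw [hsplit.eval_eq_prod_roots, hsplit.eval_eq_prod_roots, norm_mul, norm_mul,
    norm_multiset_prod, norm_multiset_prod, Multiset.map_map, Multiset.map_map]
  have hcard : g.roots.card ≤ N := g.card_roots'.trans hg
  calc ‖g.leadingCoeff‖ * (g.roots.map fun r => ‖β - r‖).prod
      ≤ ‖g.leadingCoeff‖ * (g.roots.map fun r => max 1 ‖β‖ * ‖z - r‖).prod := by
        gcongr
        refine Multiset.prod_map_le_prod_map₀ _ _ (fun _ _ => norm_nonneg _) fun r hr => ?_
        exact (norm_sub_le_max_one_mul_max_one β r).trans (by gcongr; exact hroots r hr)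
    _ = ‖g.leadingCoeff‖ * (g.roots.map fun r => ‖z - r‖).prod * max 1 ‖β‖ ^ g.roots.card := by
        rw [Multiset.prod_map_mul, Multiset.map_const', Multiset.prod_replicate]
        ring
    _ ≤ ‖g.leadingCoeff‖ * (g.roots.map fun r => ‖z - r‖).prod * max 1 ‖β‖ ^ N :=
        mul_le_mul_of_nonneg_left (pow_le_pow_right₀ (le_max_left _ _) hcard)
          (mul_nonneg (norm_nonneg _) (Multiset.prod_map_nonneg fun _ _ => norm_nonneg _))

end Ultrametric

lemma Polynomial.eval_reflect_inv_mul_pow {K : Type*} [Field K] {N : ℕ} {p : K[X]}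
    (hp : p.natDegree ≤ N) {x : K} (hx : x ≠ 0) : (reflect N p).eval x⁻¹ * x ^ N = p.eval x := by
  let := invertibleOfNonzero hx
  simpa [eval₂_id] using eval₂_reflect_mul_pow (RingHom.id K) x N p hp

lemma Complex.norm_eval_le_of_forall_norm_eq_one (p : ℂ[X]) {C : ℝ}
    (h : ∀ y : ℂ, ‖y‖ = 1 → ‖p.eval y‖ ≤ C) {x : ℂ} (hx : ‖x‖ ≤ 1) : ‖p.eval x‖ ≤ C := by
  refine Complex.norm_le_of_forall_mem_frontier_norm_le (Metric.isBounded_ball (x := 0) (r := 1))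
    p.differentiable.diffContOnCl (fun y hy => ?_) ?_
  · rw [frontier_ball 0 one_ne_zero] at hy
    exact h y (mem_sphere_zero_iff_norm.mp hy)
  · rwa [closure_ball 0 one_ne_zero, mem_closedBall_zero_iff]

theorem Complex.unitSphereBoundsEval : UnitSphereBoundsEval ℂ := by
  intro N p hp β
  obtain ⟨w, hw, hmax⟩ := (isCompact_sphere (0 : ℂ) 1).exists_isMaxOn
    (NormedSpace.sphere_nonempty.2 zero_le_one) (p.continuous.norm.continuousOn)
  have hmax' : ∀ y : ℂ, ‖y‖ = 1 → ‖p.eval y‖ ≤ ‖p.eval w‖ := fun y hy =>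
    hmax (mem_sphere_zero_iff_norm.mpr hy)
  refine ⟨w, mem_sphere_zero_iff_norm.mp hw, ?_⟩
  rcases le_or_gt ‖β‖ 1 with hβ | hβ
  · exact (norm_eval_le_of_forall_norm_eq_one p hmax' hβ).trans
      (le_mul_of_one_le_right (norm_nonneg _) (one_le_pow₀ (le_max_left _ _)))
  have hβ0 : β ≠ 0 := norm_pos_iff.mp (by linarith)
  rw [max_eq_right hβ.le, ← eval_reflect_inv_mul_pow hp hβ0, norm_mul, norm_pow]
  gcongr
  refine norm_eval_le_of_forall_norm_eq_one _ (fun y hy => ?_)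
    (by rw [norm_inv]; exact inv_le_one_of_one_le₀ hβ.le)
  have hy0 : y ≠ 0 := norm_ne_zero_iff.mp (by rw [hy]; exact one_ne_zero)
  have hrefl := eval_reflect_inv_mul_pow hp (inv_ne_zero hy0)
  rw [inv_inv] at hrefl
  calc ‖(reflect N p).eval y‖ = ‖p.eval y⁻¹‖ := by
        rw [← hrefl, norm_mul, norm_pow, norm_inv, hy, inv_one, one_pow, mul_one]
    _ ≤ ‖p.eval w‖ := hmax' _ (by rw [norm_inv, hy, inv_one])

theorem UnitSphereBoundsEval.of_ringEquiv {K L : Type*} [NormedField K] [NormedField L]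
    (j : K ≃+* L) (hj : ∀ x, ‖j x‖ = ‖x‖) (hL : UnitSphereBoundsEval L) :
    UnitSphereBoundsEval K := by
  intro N g hg β
  have hev : ∀ x, ‖(g.map (j : K →+* L)).eval (j x)‖ = ‖g.eval x‖ := fun x => by
    rw [eval_map, ← hj]; exact congrArg _ (eval₂_hom (j : K →+* L) x)
  obtain ⟨w, hw, hle⟩ := hL N (g.map (j : K →+* L)) (natDegree_map_le.trans hg) (j β)
  refine ⟨j.symm w, by rw [← hj, j.apply_symm_apply, hw], ?_⟩
  rwa [hev, ← j.apply_symm_apply w, hev, hj] at hle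

lemma elog_mono : Monotone elog := by
  intro x y h
  by_cases hx : x ≤ 0
  · simp [elog, hx]
  · have hy : ¬y ≤ 0 := fun hy => hx (h.trans hy)
    simp only [elog, if_neg hx, if_neg hy, EReal.coe_le_coe_iff]
    exact Real.log_le_log (not_le.mp hx) h

lemma elog_div (x : ℝ) {y : ℝ} (hy : 0 < y) : elog (x / y) = elog x - (Real.log y : EReal) := by
  by_cases hx : x ≤ 0
  · simp [elog, hx, div_nonpos_of_nonpos_of_nonneg hx hy.le]
  · have hx' : 0 < x := not_le.mp hx
    simp only [elog, if_neg hx, if_neg (not_le.mpr (div_pos hx' hy))]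
    rw [Real.log_div hx'.ne' hy.ne', EReal.coe_sub]

lemma elog_rpow_sub_mul_log_max_one {x y e : ℝ} (hx : 0 ≤ x) (hy : 0 ≤ y) (he : 0 ≤ e) (N : ℕ) :
    elog (x ^ e) - ((N : ℝ) * Real.log (max 1 (y ^ e)) : ℝ) = elog ((x / max 1 y ^ N) ^ e) := by
  have hM : 0 < max 1 y := lt_max_of_lt_left one_pos
  have hMe : max 1 (y ^ e) = max 1 y ^ e := by rw [Real.rpow_max zero_le_one hy he, Real.one_rpow]
  rw [Real.div_rpow hx (by positivity), elog_div _ (by positivity), hMe,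
    Real.log_rpow hM, Real.log_rpow (by positivity), Real.log_pow]
  ring_nf

section UnitSphere

variable {K : Type*} [NormedField K]

lemma Polynomial.bddAbove_norm_eval_rpow_image_unitSphere (g : K[X]) {e : ℝ} (he : 0 ≤ e) :
    BddAbove ((fun z => ‖g.eval z‖ ^ e) '' {z : K | ‖z‖ = 1}) := by
  refine ⟨(∑ i ∈ Finset.range (g.natDegree + 1), ‖g.coeff i‖) ^ e, ?_⟩
  rintro _ ⟨z, hz, rfl⟩
  refine Real.rpow_le_rpow (norm_nonneg _) ?_ he
  rw [eval_eq_sum_range]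
  refine (norm_sum_le _ _).trans (Finset.sum_le_sum fun i _ => ?_)
  rw [norm_mul, norm_pow, hz, one_pow, mul_one]

lemma elog_rpow_le_nuv {e c : ℝ} (he : 0 ≤ e) (hc : 0 ≤ c) {g : K[X]} {z : K} (hz : ‖z‖ = 1)
    (h : c ≤ ‖g.eval z‖) : elog (c ^ e) ≤ nuv e g :=
  elog_mono ((Real.rpow_le_rpow hc h he).trans
    (le_csSup (g.bddAbove_norm_eval_rpow_image_unitSphere he) ⟨z, hz, rfl⟩))

lemma nuv_C_mul_X_pow (e : ℝ) (a : K) (k : ℕ) : nuv e (C a * X ^ k) = elog (‖a‖ ^ e) := by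
  have : (fun z => ‖(C a * X ^ k).eval z‖ ^ e) '' {z : K | ‖z‖ = 1} = {‖a‖ ^ e} := by
    refine Set.eq_singleton_iff_unique_mem.2 ⟨⟨1, norm_one, by simp⟩, ?_⟩
    rintro _ ⟨z, hz, rfl⟩
    simp [show ‖z‖ = 1 from hz]
  rw [nuv, this, csSup_singleton]

lemma exists_mul_pow_eq_norm_eq_div_max_one_pow (y α : K) (N : ℕ) :
    ∃ k ≤ N, ∃ a : K, a * α ^ k = y ∧ ‖a‖ = ‖y‖ / max 1 ‖α‖ ^ N := by
  by_cases hα : ‖α‖ ≤ 1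
  · exact ⟨0, N.zero_le, y, by simp, by simp [max_eq_left hα]⟩
  · have hα0 : α ≠ 0 := by rintro rfl; simp at hα
    refine ⟨N, le_rfl, y / α ^ N, div_mul_cancel₀ _ (pow_ne_zero _ hα0), ?_⟩
    rw [norm_div, norm_pow, max_eq_right (not_le.1 hα).le]

end UnitSphere

theorem U_eq_log_sub_N_logPlus_general
    {Ω : Type*} [NontriviallyNormedField Ω] [IsAlgClosed Ω]
    (hΩ : IsUltrametricDist Ω ∨ ∃ j : Ω ≃+* ℂ, ∀ x : Ω, ‖j x‖ = ‖x‖)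
    (e : ℝ) (he : 0 < e)
    (N : ℕ) (α : Ω) (T : Polynomial Ω) (hdeg : T.natDegree ≤ N) :
    sInf {x : EReal | ∃ f : Polynomial Ω, f.eval α = 0 ∧ f.natDegree ≤ N ∧
        x = nuv e (T - f)} =
      elog (‖T.eval α‖ ^ e) - ((N : ℝ) * Real.log (max 1 (‖α‖ ^ e)) : ℝ) := by
  have hbound : UnitSphereBoundsEval Ω := by
    rcases hΩ with hΩ | ⟨j, hj⟩
    · exact IsUltrametricDist.unitSphereBoundsEval
    · exact .of_ringEquiv j hj Complex.unitSphereBoundsEval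
  rw [elog_rpow_sub_mul_log_max_one (norm_nonneg _) (norm_nonneg _) he.le]
  apply le_antisymm
  · obtain ⟨k, hk, a, haα, ha⟩ := exists_mul_pow_eq_norm_eq_div_max_one_pow (T.eval α) α N
    refine sInf_le ⟨T - C a * X ^ k, by simp [haα],
      (natDegree_sub_le _ _).trans (max_le hdeg ((natDegree_C_mul_X_pow_le a k).trans hk)), ?_⟩
    rw [sub_sub_cancel, nuv_C_mul_X_pow, ha]
  · refine le_sInf ?_
    rintro _ ⟨f, hf, hfN, rfl⟩
    obtain ⟨z, hz, hle⟩ := hbound N (T - f) ((natDegree_sub_le _ _).trans (max_le hdeg hfN)) α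
    rw [eval_sub, hf, sub_zero] at hle
    exact elog_rpow_le_nuv he.le (by positivity) hz ((div_le_iff₀ (by positivity)).2 hle)

/-- `Ω` models the completion `Ω_v` of an algebraic closure of `K_v` for a place `v` of a
number field `K`, with normalized absolute value `|x|_v = ‖x‖ ^ e`.  For `deg T ≤ N`,
`U_v(N, α, T) = inf{ν_v(T - f) : f(α) = 0, deg f ≤ N}` equals
`log|T(α)|_v - N·log⁺|α|_v`, both sides being `-∞` when `T(α) = 0`. -/
theorem U_eq_log_sub_N_logPlus
    {Ω : Type*} [NontriviallyNormedField Ω] [CompleteSpace Ω] [IsAlgClosed Ω]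
    (hΩ : IsUltrametricDist Ω ∨ ∃ j : Ω ≃+* ℂ, ∀ x : Ω, ‖j x‖ = ‖x‖)
    (e : ℝ) (he : 0 < e) (he1 : e ≤ 1)
    (N : ℕ) (α : Ω) (T : Polynomial Ω) (hdeg : T.natDegree ≤ N) :
    sInf {x : EReal | ∃ f : Polynomial Ω, f.eval α = 0 ∧ f.natDegree ≤ N ∧
        x = nuv e (T - f)} =
      elog (‖T.eval α‖ ^ e) - ((N : ℝ) * Real.log (max 1 (‖α‖ ^ e)) : ℝ) :=
  U_eq_log_sub_N_logPlus_general hΩ e he N α T hdeg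
end

section
/- Let m ≥ 2 be an integer and f ∈ ℤ[x] of degree n with f(x) ≡ xⁿ − 1 (mod m), i.e., m divides every coefficient of f(x) − (xⁿ − 1). Let g be a factor of f over ℤ with no cyclotomic factors and g(1) ≠ 0. Then the Mahler measure satisfies μ(g) ≥ log(m/2)·(deg g)/n. -/
open Polynomial

/-- The logarithmic Mahler measure of an integer polynomial:
`μ(g) = log|lead(g)| + Σ log⁺|α|` over the complex roots `α` of `g`. -/
noncomputable def mahlerMeasure (g : Polynomial ℤ) : ℝ :=
  Real.log |(g.leadingCoeff : ℝ)| +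
    (((g.map (Int.castRingHom ℂ)).roots).map
      (fun z => Real.log (max 1 (‖z‖)))).sum

/-- `g` has no cyclotomic factors. -/
def NoCyclotomicFactor (g : Polynomial ℤ) : Prop :=
  ∀ k : ℕ, 0 < k → ¬ (Polynomial.cyclotomic k ℤ ∣ g)

/-- The logarithmic supremum norm of a complex polynomial on the unit circle. -/
noncomputable def nuC (T : Polynomial ℂ) : ℝ :=
  Real.log (sSup ((fun z => ‖T.eval z‖) '' {z : ℂ | ‖z‖ = 1}))

/-!
Let `r = Res(g, Xⁿ - 1) ∈ ℤ` and `D = deg g`. Writing `Xⁿ - 1 = f - m·h` with `g ∣ f`, the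
resultant does not change when `Xⁿ - 1` is replaced by its residue `-m·h` modulo `g`, so
`m^D ∣ r`. Over `ℂ`, `r = lead(g)ⁿ · ∏ (αⁿ - 1)` over the roots `α` of `g`; this is nonzero
because no root of `g` is a root of unity, and `|αⁿ - 1| ≤ 2 max(1, |α|)ⁿ` gives
`|r| ≤ 2^D M(g)ⁿ` with `M(g) = exp μ(g)`. Hence `m^D ≤ 2^D M(g)ⁿ`, and taking logarithms
gives the bound.
-/

theorem NoCyclotomicFactor.ne_zero {g : ℤ[X]} (hg : NoCyclotomicFactor g) : g ≠ 0 :=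
  fun h => hg 1 one_pos (h ▸ dvd_zero _)

theorem NoCyclotomicFactor.aeval_ne_zero {K : Type*} [Field K] [CharZero K] {g : ℤ[X]}
    (hg : NoCyclotomicFactor g) {ζ : K} {n : ℕ} (hn : 0 < n) (hζ : ζ ^ n = 1) :
    aeval ζ g ≠ 0 := by
  intro hroot
  have hord : 0 < orderOf ζ := (isOfFinOrder_iff_pow_eq_one.mpr ⟨n, hn, hζ⟩).orderOf_pos
  have hint : IsIntegral ℤ ζ := ⟨X ^ n - 1, monic_X_pow_sub_C 1 hn.ne', by simp [hζ]⟩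
  refine hg _ hord ?_
  rw [cyclotomic_eq_minpoly (IsPrimitiveRoot.orderOf ζ) hord]
  exact minpoly.isIntegrallyClosed_dvd hint hroot

theorem pow_natDegree_dvd_resultant_sub_C_mul {R : Type*} [CommRing R] [IsDomain R]
    {f g : R[X]} (h : R[X]) (c : R) {n : ℕ} (hgf : g ∣ f) (hf0 : f ≠ 0)
    (hfn : f.natDegree ≤ n) :
    c ^ g.natDegree ∣ resultant g (f - C c * h) g.natDegree n := by
  obtain ⟨w, rfl⟩ := hgf
  have hw : w.natDegree + g.natDegree ≤ n := by
    rw [add_comm, ← natDegree_mul (left_ne_zero_of_mul hf0) (right_ne_zero_of_mul hf0)]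
    exact hfn
  rw [show g * w - C c * h = C (-c) * h + g * w by rw [C_neg]; ring,
    resultant_add_mul_right _ _ _ _ _ hw le_rfl, resultant_C_mul_right, neg_pow]
  exact (dvd_mul_left _ _).mul_right _

theorem resultant_X_pow_sub_one_eq_prod {K : Type*} [Field K] [IsAlgClosed K] (p : K[X]) (n : ℕ) :
    resultant p (X ^ n - 1) p.natDegree n =
      p.leadingCoeff ^ n * (p.roots.map fun α => α ^ n - 1).prod := by
  rw [resultant_eq_prod_eval _ _ _ _ (IsAlgClosed.splits p)]
  · simp
  · simpa using (natDegree_X_pow_sub_C (n := n) (r := (1 : K))).le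

theorem resultant_X_pow_sub_one_ne_zero {K : Type*} [Field K] [IsAlgClosed K] {p : K[X]}
    (hp : p ≠ 0) {n : ℕ} (hroots : ∀ α ∈ p.roots, α ^ n ≠ 1) :
    resultant p (X ^ n - 1) p.natDegree n ≠ 0 := by
  rw [resultant_X_pow_sub_one_eq_prod]
  refine mul_ne_zero (pow_ne_zero _ (leadingCoeff_ne_zero.mpr hp)) (Multiset.prod_ne_zero ?_)
  simpa [sub_eq_zero] using hroots

theorem norm_pow_sub_one_le (α : ℂ) (n : ℕ) : ‖α ^ n - 1‖ ≤ 2 * max 1 ‖α‖ ^ n := by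
  have h1 : ‖α‖ ^ n ≤ max 1 ‖α‖ ^ n := by gcongr; exact le_max_right _ _
  have h2 : 1 ≤ max 1 ‖α‖ ^ n := one_le_pow₀ (le_max_left _ _)
  calc ‖α ^ n - 1‖ ≤ ‖α‖ ^ n + 1 := by simpa using norm_sub_le (α ^ n) 1
    _ ≤ 2 * max 1 ‖α‖ ^ n := by linarith

theorem norm_resultant_X_pow_sub_one_le (p : ℂ[X]) (n : ℕ) :
    ‖resultant p (X ^ n - 1) p.natDegree n‖ ≤ 2 ^ p.natDegree * p.mahlerMeasure ^ n := by
  calc ‖resultant p (X ^ n - 1) p.natDegree n‖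
      = ‖p.leadingCoeff‖ ^ n * (p.roots.map fun α => ‖α ^ n - 1‖).prod := by
        rw [resultant_X_pow_sub_one_eq_prod, norm_mul, norm_pow]
        change _ * (normHom : ℂ →*₀ ℝ) _ = _
        rw [map_multiset_prod, Multiset.map_map]
        rfl
    _ ≤ ‖p.leadingCoeff‖ ^ n * (p.roots.map fun α => 2 * max 1 ‖α‖ ^ n).prod := by
        gcongr
        exact Multiset.prod_map_le_prod_map₀ _ _ (fun _ _ => norm_nonneg _)
          (fun α _ => norm_pow_sub_one_le α n)
    _ = 2 ^ p.natDegree * p.mahlerMeasure ^ n := by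
        rw [Multiset.prod_map_mul, Multiset.map_const', Multiset.prod_replicate,
          Multiset.prod_map_pow, mahlerMeasure_eq_leadingCoeff_mul_prod_roots,
          IsAlgClosed.card_roots_eq_natDegree]
        ring

theorem resultant_X_pow_sub_one_map {R S : Type*} [CommRing R] [CommRing S] {φ : R →+* S}
    (hφ : Function.Injective φ) (g : R[X]) (n : ℕ) :
    φ (resultant g (X ^ n - 1) g.natDegree n) =
      resultant (g.map φ) (X ^ n - 1) (g.map φ).natDegree n := by
  rw [natDegree_map_eq_of_injective hφ, ← resultant_map_map, Polynomial.map_sub,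
    Polynomial.map_pow, map_X, Polynomial.map_one]

theorem NoCyclotomicFactor.resultant_X_pow_sub_one_ne_zero {g : ℤ[X]} (hg : NoCyclotomicFactor g)
    {n : ℕ} (hn : 0 < n) : resultant g (X ^ n - 1) g.natDegree n ≠ 0 := by
  have hι : Function.Injective (algebraMap ℤ ℂ) := RingHom.injective_int _
  refine fun h0 => _root_.resultant_X_pow_sub_one_ne_zero
    ((Polynomial.map_ne_zero_iff hι).mpr hg.ne_zero) (fun α hα hαn => ?_)
    (by rw [← resultant_X_pow_sub_one_map hι, h0, map_zero])
  refine hg.aeval_ne_zero hn hαn ?_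
  rw [← eval_map_algebraMap]
  exact (mem_roots'.mp hα).2

theorem mahlerMeasure_eq_logMahlerMeasure_map (g : ℤ[X]) :
    mahlerMeasure g = (g.map (Int.castRingHom ℂ)).logMahlerMeasure := by
  rw [logMahlerMeasure_eq_log_leadingCoeff_add_sum_log_roots, _root_.mahlerMeasure]
  simp [leadingCoeff_map_of_injective (RingHom.injective_int (Int.castRingHom ℂ)),
    Real.posLog_eq_log_max_one]

theorem natDegree_mul_log_le_of_pow_dvd_resultant (g : ℤ[X]) {n c : ℕ} (hc : 0 < c)
    (hr : resultant g (X ^ n - 1) g.natDegree n ≠ 0)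
    (hdvd : (c : ℤ) ^ g.natDegree ∣ resultant g (X ^ n - 1) g.natDegree n) :
    g.natDegree * Real.log (c / 2) ≤ n * mahlerMeasure g := by
  set r := resultant g (X ^ n - 1) g.natDegree n
  set gC := g.map (Int.castRingHom ℂ)
  have hlow : (c : ℝ) ^ g.natDegree ≤ |(r : ℝ)| := by
    exact_mod_cast Int.le_of_dvd (abs_pos.mpr hr) ((dvd_abs _ _).mpr hdvd)
  have hup : |(r : ℝ)| ≤ 2 ^ g.natDegree * gC.mahlerMeasure ^ n := by
    have hrC : (r : ℂ) = resultant gC (X ^ n - 1) gC.natDegree n :=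
      resultant_X_pow_sub_one_map (RingHom.injective_int (Int.castRingHom ℂ)) g n
    rw [← Complex.norm_intCast, hrC,
      ← natDegree_map_eq_of_injective (RingHom.injective_int (Int.castRingHom ℂ)) g]
    exact norm_resultant_X_pow_sub_one_le gC n
  have hcD : (0 : ℝ) < c ^ g.natDegree := by positivity
  have hM : gC.mahlerMeasure ^ n ≠ 0 := by
    intro h0
    rw [h0, mul_zero] at hup
    linarith
  have hlog := Real.log_le_log hcD (hlow.trans hup)
  rw [Real.log_mul (by positivity) hM, Real.log_pow, Real.log_pow, Real.log_pow] at hlog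
  rw [Real.log_div (by positivity) two_ne_zero, mahlerMeasure_eq_logMahlerMeasure_map,
    logMahlerMeasure_eq_log_MahlerMeasure]
  linarith

theorem mahler_ge_of_congruent_xn_sub_one_general (m : ℕ) (hm : 2 ≤ m)
    (f : Polynomial ℤ) (n : ℕ) (hn : 0 < n) (hfdeg : f.natDegree = n)
    (hcong : ∀ i : ℕ, (m : ℤ) ∣ (f - (X ^ n - 1)).coeff i)
    (g : Polynomial ℤ) (hg : g ∣ f) (hcyc : NoCyclotomicFactor g) :
    mahlerMeasure g ≥ Real.log ((m : ℝ) / 2) * (g.natDegree : ℝ) / (n : ℝ) := by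
  obtain ⟨h, hh⟩ := (C_dvd_iff_dvd_coeff _ _).mpr hcong
  have hf0 : f ≠ 0 := ne_zero_of_natDegree_gt (hfdeg.symm ▸ hn)
  have hdvd := pow_natDegree_dvd_resultant_sub_C_mul h (m : ℤ) hg hf0 hfdeg.le
  rw [← hh, sub_sub_cancel] at hdvd
  have hlog := natDegree_mul_log_le_of_pow_dvd_resultant g (by omega)
    (hcyc.resultant_X_pow_sub_one_ne_zero hn) hdvd
  rw [ge_iff_le, div_le_iff₀ (by exact_mod_cast hn)]
  linarith

/-- If `f ∈ ℤ[x]` has degree `n`, `f ≡ xⁿ - 1 (mod m)` with `m ≥ 2`, and `g` is a factor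
of `f` over `ℤ` with no cyclotomic factors and `g(1) ≠ 0`, then
`μ(g) ≥ log(m/2)·(deg g)/n`. -/
theorem mahler_ge_of_congruent_xn_sub_one (m : ℕ) (hm : 2 ≤ m)
    (f : Polynomial ℤ) (n : ℕ) (hn : 0 < n) (hfdeg : f.natDegree = n)
    (hcong : ∀ i : ℕ, (m : ℤ) ∣ (f - (X ^ n - 1)).coeff i)
    (g : Polynomial ℤ) (hg : g ∣ f) (hcyc : NoCyclotomicFactor g) (hg1 : g.eval 1 ≠ 0) :
    mahlerMeasure g ≥ Real.log ((m : ℝ) / 2) * (g.natDegree : ℝ) / (n : ℝ) :=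
  mahler_ge_of_congruent_xn_sub_one_general m hm f n hn hfdeg hcong g hg hcyc
end

section
/- Let p be prime and α a totally p-adic algebraic unit. If T ∈ ℤ[x] satisfies T(α^{p−1}) ≠ 0, then h(α) ≥ (ω_p(T) − ν_∞(T)) / ((p−1)·deg T), where ω_p(T) = log gcd{p^k T^{(k)}(1)/k! : 0 ≤ k ≤ deg T} and ν_∞(T) = log sup{|T(z)| : z ∈ ℂ, |z| = 1}. -/
/-!
Put `β = α ^ (p - 1)`. Every prime of `𝓞 K` above `p` has residue field `𝔽_p`, so Fermat gives
`β ≡ 1` modulo it, and since `p 𝓞 K` is squarefree, `p ∣ β - 1`. Expanding `T` at `1`,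
`T(β) = ∑ p^k (T^{(k)}(1)/k!) ((β - 1)/p)^k`, so the gcd `g` defining `ω_p(T)` divides the nonzero
algebraic integer `T(β)` and `g^[K:ℚ] ≤ |N(T(β))| = ∏_w w(T(β))^{m_w}`. Conversely the maximum
principle bounds `w(T(β)) ≤ sup_{|z|=1} |T(z)| · max(1, w(α))^{(p-1) deg T}`. Taking logarithms and
summing over the archimedean places, where all of the height of the unit `α` lives, gives
`ω_p(T) ≤ ν_∞(T) + (p - 1) deg T · h(α)`.
-/

open NumberField IsDedekindDomain Polynomial
open scoped Classical

variable {K : Type*} [Field K] [NumberField K]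

/-- The normalized absolute value attached to a finite place `v` of the number field `K`:
`|x|_v = N(v)^{-ord_v(x)}`, where `N(v)` is the absolute norm of the prime ideal. -/
noncomputable def padicAbs (v : HeightOneSpectrum (𝓞 K)) (x : K) : ℝ :=
  if hx : x = 0 then 0
  else (Ideal.absNorm v.asIdeal : ℝ) ^
    (Multiplicative.toAdd (WithZero.unzero (((v.valuation K).ne_zero_iff).mpr hx)) : ℤ)

/-- The absolute logarithmic Weil height of an element of a number field, written as the
sum over all (infinite and finite) places of `log⁺` of the normalized absolute values. -/
noncomputable def weilHeight (x : K) : ℝ :=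
  (1 / (Module.finrank ℚ K : ℝ)) *
    ((∑ w : InfinitePlace K, (w.mult : ℝ) * Real.log (max 1 (w x))) +
      ∑ᶠ v : HeightOneSpectrum (𝓞 K), Real.log (max 1 (padicAbs v x)))

/-- The Archimedean part `ν_∞(T) = Σ_{v∣∞} ν_v(T)` of the sup norm of `T ∈ K[x]` on unit
circles, with the normalized absolute values. -/
noncomputable def nuInfty (T : Polynomial K) : ℝ :=
  (1 / (Module.finrank ℚ K : ℝ)) *
    ∑ w : InfinitePlace K, (w.mult : ℝ) *
      Real.log (sSup ((fun z => ‖(T.map w.embedding).eval z‖) ''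
        {z : ℂ | ‖z‖ = 1}))

/-- `ω_p(T) = log gcd{p^k T^{(k)}(1)/k! : 0 ≤ k ≤ deg T}`; note that
`T^{(k)}(1)/k!` is the `k`-th coefficient of the Taylor expansion of `T` at `1`. -/
noncomputable def omegap (p : ℕ) (T : Polynomial ℤ) : ℝ :=
  Real.log (((Finset.range (T.natDegree + 1)).gcd
    (fun k => (p : ℤ) ^ k * ((Polynomial.taylor 1 T).coeff k)) : ℤ) : ℝ)

section Dedekind

variable {R : Type*} [CommRing R]

theorem pow_card_sub_one_sub_one_mem (I : Ideal R) [I.IsMaximal] {a : R} (ha : IsUnit a) :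
    a ^ (Nat.card (R ⧸ I) - 1) - 1 ∈ I := by
  let := Ideal.Quotient.field I
  rw [← Ideal.Quotient.eq_zero_iff_mem, map_sub, map_pow, map_one, sub_eq_zero]
  cases finite_or_infinite (R ⧸ I)
  · have := Fintype.ofFinite (R ⧸ I)
    rw [Nat.card_eq_fintype_card]
    exact FiniteField.pow_card_sub_one_eq_one _ (ha.map _).ne_zero
  · rw [Nat.card_eq_zero_of_infinite, zero_tsub, pow_zero]

variable [IsDedekindDomain R]

theorem squarefree_of_forall_not_sq_dvd {I : Ideal R} (hI : I ≠ ⊥)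
    (h : ∀ v : HeightOneSpectrum R, v.asIdeal ∣ I → ¬ v.asIdeal ^ 2 ∣ I) : Squarefree I := by
  rw [squarefree_iff_irreducible_sq_not_dvd_of_ne_zero hI]
  intro P hP hPP
  have hPrime := UniqueFactorizationMonoid.irreducible_iff_prime.mp hP
  exact h ⟨P, Ideal.isPrime_of_prime hPrime, hPrime.ne_zero⟩ (dvd_of_mul_right_dvd hPP)
    (by rwa [sq])

theorem mem_of_squarefree_of_forall_mem {I : Ideal R} (hI : Squarefree I) {x : R}
    (hx : ∀ v : HeightOneSpectrum R, v.asIdeal ∣ I → x ∈ v.asIdeal) : x ∈ I := by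
  have hrad : x ∈ I.radical := by
    rw [Ideal.radical_eq_sInf, Submodule.mem_sInf]
    rintro J ⟨hIJ, hJ⟩
    exact hx ⟨J, hJ, ne_bot_of_le_ne_bot hI.ne_zero hIJ⟩ (Ideal.dvd_iff_le.mpr hIJ)
  obtain ⟨n, hn⟩ := hrad
  have hdvd : I ∣ Ideal.span {x} ^ n := by
    rwa [Ideal.span_singleton_pow, Ideal.dvd_span_singleton]
  exact Ideal.dvd_span_singleton.mp (hI.isRadical n _ hdvd)

variable [CharZero R] [Module.Free ℤ R]

theorem natCast_dvd_pow_sub_one_sub_one {p : ℕ} (hp : p ≠ 0)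
    (hsplit : ∀ v : HeightOneSpectrum R, v.asIdeal ∣ Ideal.span {(p : R)} →
      Ideal.absNorm v.asIdeal = p ∧ ¬ (v.asIdeal ^ 2 ∣ Ideal.span {(p : R)}))
    {a : R} (ha : IsUnit a) : (p : R) ∣ a ^ (p - 1) - 1 := by
  rw [← Ideal.mem_span_singleton]
  have hspan : Ideal.span {(p : R)} ≠ ⊥ := by simpa using hp
  refine mem_of_squarefree_of_forall_mem
    (squarefree_of_forall_not_sq_dvd hspan fun v hv => (hsplit v hv).2) fun v hv => ?_
  have hcard : Nat.card (R ⧸ v.asIdeal) = p := by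
    rw [← (hsplit v hv).1, Ideal.absNorm_apply, Submodule.cardQuot_apply]
  have := v.isMaximal
  simpa [hcard] using pow_card_sub_one_sub_one_mem v.asIdeal ha

end Dedekind

noncomputable def taylorGcd (p : ℕ) (T : ℤ[X]) : ℤ :=
  (Finset.range (T.natDegree + 1)).gcd (fun k => (p : ℤ) ^ k * (taylor 1 T).coeff k)

theorem omegap_eq_log_taylorGcd (p : ℕ) (T : ℤ[X]) : omegap p T = Real.log (taylorGcd p T) :=
  rfl

theorem taylorGcd_dvd_aeval {R : Type*} [CommRing R] (p : ℕ) (T : ℤ[X]) {β : R}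
    (hβ : (p : R) ∣ β - 1) : (taylorGcd p T : R) ∣ aeval β T := by
  obtain ⟨δ, hδ⟩ := hβ
  have hshift : aeval β T = aeval (β - 1) (taylor 1 T) := by
    rw [taylor_apply, aeval_comp]
    simp
  have hdeg : (taylor 1 T).natDegree < T.natDegree + 1 := by
    rw [natDegree_taylor]; exact Nat.lt_succ_self _
  rw [hshift, aeval_eq_sum_range' hdeg]
  refine Finset.dvd_sum fun k hk => ?_
  have hterm : (taylor 1 T).coeff k • (β - 1) ^ k =
      (((p : ℤ) ^ k * (taylor 1 T).coeff k : ℤ) : R) * δ ^ k := by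
    rw [hδ, zsmul_eq_mul]; push_cast; ring
  rw [hterm]
  exact dvd_mul_of_dvd_left (Int.cast_dvd_cast _ _ (Finset.gcd_dvd hk)) _

theorem padicAbs_of_isUnit {α : 𝓞 K} (hα : IsUnit α) (v : HeightOneSpectrum (𝓞 K)) :
    padicAbs v (algebraMap (𝓞 K) K α) = 1 := by
  have hα0 : algebraMap (𝓞 K) K α ≠ 0 := by simpa using hα.ne_zero
  have hval : v.valuation K (algebraMap (𝓞 K) K α) = 1 :=
    (v.valuation_eq_one_iff_notMem).mpr (v.asIdeal.notMem_of_isUnit hα)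
  have hunzero : WithZero.unzero ((v.valuation K).ne_zero_iff.mpr hα0) = 1 :=
    WithZero.coe_inj.mp ((WithZero.coe_unzero _).trans hval)
  simp [padicAbs, hα0, hunzero]

theorem weilHeight_nonneg (x : K) : 0 ≤ weilHeight x := by
  have hlog : ∀ y : ℝ, 0 ≤ Real.log (max 1 y) := fun y => Real.log_nonneg (le_max_left _ _)
  refine mul_nonneg (by positivity) (add_nonneg ?_ (finsum_nonneg fun v => hlog _))
  exact Finset.sum_nonneg fun w _ => mul_nonneg (Nat.cast_nonneg _) (hlog _)

theorem finrank_mul_weilHeight_of_isUnit {α : 𝓞 K} (hα : IsUnit α) :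
    Module.finrank ℚ K * weilHeight (algebraMap (𝓞 K) K α) =
      ∑ w : InfinitePlace K, (w.mult : ℝ) * Real.log (max 1 (w (algebraMap (𝓞 K) K α))) := by
  have hn : (Module.finrank ℚ K : ℝ) ≠ 0 := by exact_mod_cast Module.finrank_pos.ne'
  simp [weilHeight, padicAbs_of_isUnit hα, hn]

theorem finrank_mul_log_le_sum_mult_log {g : ℤ} {γ : 𝓞 K} (hγ : γ ≠ 0) (hg : (g : 𝓞 K) ∣ γ) :
    Module.finrank ℚ K * Real.log g ≤
      ∑ w : InfinitePlace K, (w.mult : ℝ) * Real.log (w (algebraMap (𝓞 K) K γ)) := by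
  obtain ⟨δ, rfl⟩ := hg
  have hg0 : g ≠ 0 := by rintro rfl; simp at hγ
  have hδ0 : δ ≠ 0 := by rintro rfl; simp at hγ
  have hnorm : |(Algebra.norm ℤ (g * δ : 𝓞 K) : ℝ)| =
      |(g : ℝ)| ^ Module.finrank ℚ K * |(Algebra.norm ℤ δ : ℝ)| := by
    rw [map_mul, ← eq_intCast (algebraMap ℤ (𝓞 K)), Algebra.norm_algebraMap, RingOfIntegers.rank]
    push_cast
    rw [abs_mul, abs_pow]
  have hδnorm : (1 : ℝ) ≤ |(Algebra.norm ℤ δ : ℝ)| := by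
    exact_mod_cast Int.one_le_abs (Algebra.norm_ne_zero_iff.mpr hδ0)
  have hγpos : ∀ w : InfinitePlace K, 0 < w (algebraMap (𝓞 K) K (g * δ)) := fun w =>
    w.pos_iff.mpr (by simpa using hγ)
  calc (Module.finrank ℚ K : ℝ) * Real.log g
      = Real.log (|(g : ℝ)| ^ Module.finrank ℚ K) := by rw [Real.log_pow, Real.log_abs]
    _ ≤ Real.log |(Algebra.norm ℤ (g * δ : 𝓞 K) : ℝ)| := by
        rw [hnorm]
        exact Real.log_le_log (by positivity) (le_mul_of_one_le_right (by positivity) hδnorm)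
    _ = Real.log (∏ w : InfinitePlace K, w (algebraMap (𝓞 K) K (g * δ)) ^ w.mult) := by
        rw [InfinitePlace.prod_eq_abs_norm, ← Algebra.coe_norm_int]; push_cast; rfl
    _ = ∑ w : InfinitePlace K, (w.mult : ℝ) * Real.log (w (algebraMap (𝓞 K) K (g * δ))) := by
        rw [Real.log_prod fun w _ => (pow_pos (hγpos w) _).ne']
        simp only [Real.log_pow]

namespace Polynomial

variable (Q : ℂ[X]) {S : ℝ}

theorem norm_eval_le_of_norm_le_one (hS : ∀ w : ℂ, ‖w‖ = 1 → ‖Q.eval w‖ ≤ S) {z : ℂ}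
    (hz : ‖z‖ ≤ 1) : ‖Q.eval z‖ ≤ S := by
  have hfrontier : ∀ w ∈ frontier (Metric.ball (0 : ℂ) 1), ‖Q.eval w‖ ≤ S := fun w hw =>
    hS w (by simpa [frontier_ball (0 : ℂ) one_ne_zero] using hw)
  exact Complex.norm_le_of_forall_mem_frontier_norm_le Metric.isBounded_ball
    Q.differentiable.diffContOnCl hfrontier
    (by simpa [closure_ball (0 : ℂ) one_ne_zero] using hz)

theorem norm_eval_le_mul_max_one_pow (hS : ∀ w : ℂ, ‖w‖ = 1 → ‖Q.eval w‖ ≤ S) (z : ℂ) :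
    ‖Q.eval z‖ ≤ S * max 1 ‖z‖ ^ Q.natDegree := by
  have hS0 : 0 ≤ S := (norm_nonneg _).trans (hS 1 (by simp))
  rcases le_or_gt ‖z‖ 1 with hz | hz
  · calc ‖Q.eval z‖ ≤ S := Q.norm_eval_le_of_norm_le_one hS hz
      _ ≤ S * max 1 ‖z‖ ^ Q.natDegree :=
        le_mul_of_one_le_right hS0 (one_le_pow₀ (le_max_left _ _))
  -- Outside the disc, apply the maximum principle to the reversed polynomial at `z⁻¹`.
  have hrev : ∀ w : ℂ, w ≠ 0 → Q.eval w = Q.reverse.eval w⁻¹ * w ^ Q.natDegree := fun w hw => by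
    have := invertibleOfNonzero hw
    simpa [invOf_eq_inv] using (eval₂_reverse_mul_pow (RingHom.id ℂ) w Q).symm
  have hSrev : ∀ w : ℂ, ‖w‖ = 1 → ‖Q.reverse.eval w‖ ≤ S := fun w hw => by
    have hw0 : w ≠ 0 := by rintro rfl; norm_num at hw
    have hwinv : ‖w⁻¹‖ = 1 := by simp [hw]
    simpa [hwinv, hw] using
      (congrArg norm (hrev w⁻¹ (inv_ne_zero hw0))).symm.le.trans (hS _ hwinv)
  have hz0 : z ≠ 0 := by rintro rfl; norm_num at hz
  calc ‖Q.eval z‖ = ‖Q.reverse.eval z⁻¹‖ * ‖z‖ ^ Q.natDegree := by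
        rw [hrev z hz0, norm_mul, norm_pow]
    _ ≤ S * max 1 ‖z‖ ^ Q.natDegree := by
        gcongr
        · exact Q.reverse.norm_eval_le_of_norm_le_one hSrev
            (by rw [norm_inv]; exact inv_le_one_of_one_le₀ hz.le)
        · exact le_max_right _ _

noncomputable def circleSup : ℝ :=
  sSup ((fun z => ‖Q.eval z‖) '' {z : ℂ | ‖z‖ = 1})

theorem norm_eval_le_circleSup {z : ℂ} (hz : ‖z‖ = 1) : ‖Q.eval z‖ ≤ Q.circleSup := by
  have hcircle : {z : ℂ | ‖z‖ = 1} = Metric.sphere 0 1 := by ext; simp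
  refine le_csSup ?_ (Set.mem_image_of_mem _ hz)
  rw [hcircle]
  exact ((isCompact_sphere 0 1).image (continuous_norm.comp Q.continuous)).bddAbove

theorem circleSup_pos (hQ : Q ≠ 0) : 0 < Q.circleSup := by
  refine lt_of_le_of_ne ((norm_nonneg _).trans (Q.norm_eval_le_circleSup (z := 1) (by simp)))
    fun h0 => hQ (Polynomial.funext fun z => ?_)
  simpa [← h0] using Q.norm_eval_le_mul_max_one_pow (fun w => Q.norm_eval_le_circleSup) z

end Polynomial

theorem NumberField.InfinitePlace.apply_aeval_le {F : Type*} [Field F] (T : ℤ[X])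
    (w : InfinitePlace F) (x : F) :
    w (aeval x T) ≤
      (T.map (Int.castRingHom ℂ)).circleSup * max 1 (w x) ^ T.natDegree := by
  have hembed : w.embedding (aeval x T) = (T.map (Int.castRingHom ℂ)).eval (w.embedding x) := by
    change w.embedding.toIntAlgHom (aeval x T) = _
    rw [← aeval_algHom_apply, ← algebraMap_int_eq, eval_map_algebraMap]
    rfl
  rw [← w.norm_embedding_eq, ← w.norm_embedding_eq, hembed,
    ← natDegree_map_eq_of_injective (f := Int.castRingHom ℂ) Int.cast_injective T]
  exact norm_eval_le_mul_max_one_pow _ (fun z => norm_eval_le_circleSup _) _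

theorem sum_mult_log_apply_aeval_le (T : ℤ[X]) {x : K} (hx : aeval x T ≠ 0) :
    ∑ w : InfinitePlace K, (w.mult : ℝ) * Real.log (w (aeval x T)) ≤
      Module.finrank ℚ K * nuC (T.map (Int.castRingHom ℂ)) +
        T.natDegree * ∑ w : InfinitePlace K, (w.mult : ℝ) * Real.log (max 1 (w x)) := by
  have hT : T.map (Int.castRingHom ℂ) ≠ 0 :=
    (Polynomial.map_ne_zero_iff Int.cast_injective).mpr (by rintro rfl; simp at hx)
  have hS := circleSup_pos _ hT
  have hlog : ∀ w : InfinitePlace K, Real.log (w (aeval x T)) ≤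
      nuC (T.map (Int.castRingHom ℂ)) + T.natDegree * Real.log (max 1 (w x)) := fun w => by
    calc Real.log (w (aeval x T))
        ≤ Real.log ((T.map (Int.castRingHom ℂ)).circleSup * max 1 (w x) ^ T.natDegree) :=
          Real.log_le_log (w.pos_iff.mpr hx) (w.apply_aeval_le T x)
      _ = _ := by
          rw [Real.log_mul hS.ne' (by positivity), Real.log_pow]
          rfl
  calc _ ≤ ∑ w : InfinitePlace K, (w.mult : ℝ) *
        (nuC (T.map (Int.castRingHom ℂ)) + T.natDegree * Real.log (max 1 (w x))) :=
        Finset.sum_le_sum fun w _ => mul_le_mul_of_nonneg_left (hlog w) (by positivity)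
    _ = _ := by
        simp only [mul_add, Finset.sum_add_distrib, ← Finset.sum_mul, Finset.mul_sum]
        rw [← Nat.cast_sum, InfinitePlace.sum_mult_eq]
        congr 1
        exact Finset.sum_congr rfl fun w _ => by ring

theorem sum_mult_log_max_one_pow (x : K) (k : ℕ) :
    ∑ w : InfinitePlace K, (w.mult : ℝ) * Real.log (max 1 (w (x ^ k))) =
      k * ∑ w : InfinitePlace K, (w.mult : ℝ) * Real.log (max 1 (w x)) := by
  rw [Finset.mul_sum]
  refine Finset.sum_congr rfl fun w _ => ?_
  rw [map_pow, ← Real.posLog_eq_log_max_one (by positivity), Real.posLog_pow,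
    Real.posLog_eq_log_max_one (apply_nonneg w x)]
  ring

theorem height_totally_padic_unit_general (p : ℕ) (hp : p.Prime) (α : 𝓞 K)
    (hunit : IsUnit α)
    (hsplit : ∀ v : HeightOneSpectrum (𝓞 K), v.asIdeal ∣ Ideal.span {(p : 𝓞 K)} →
      Ideal.absNorm v.asIdeal = p ∧ ¬ (v.asIdeal ^ 2 ∣ Ideal.span {(p : 𝓞 K)}))
    (T : Polynomial ℤ)
    (hT : (T.map (Int.castRingHom K)).eval ((algebraMap (𝓞 K) K α) ^ (p - 1)) ≠ 0) :
    weilHeight (algebraMap (𝓞 K) K α) ≥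
      (omegap p T - nuC (T.map (Int.castRingHom ℂ))) / (((p : ℝ) - 1) * T.natDegree) := by
  rw [← algebraMap_int_eq, eval_map_algebraMap] at hT
  have hγ : aeval (algebraMap (𝓞 K) K α ^ (p - 1)) T =
      algebraMap (𝓞 K) K (aeval (α ^ (p - 1)) T) := by
    rw [← map_pow, aeval_algebraMap_apply]
  have hlower := finrank_mul_log_le_sum_mult_log (by rintro h; simp [hγ, h] at hT)
    (taylorGcd_dvd_aeval p T (natCast_dvd_pow_sub_one_sub_one hp.ne_zero hsplit hunit))
  rw [← omegap_eq_log_taylorGcd, ← hγ] at hlower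
  have hupper := sum_mult_log_apply_aeval_le T hT
  rw [sum_mult_log_max_one_pow, ← finrank_mul_weilHeight_of_isUnit hunit,
    Nat.cast_sub hp.one_le, Nat.cast_one] at hupper
  have hn : (0 : ℝ) < Module.finrank ℚ K := by exact_mod_cast Module.finrank_pos
  have hkey : omegap p T - nuC (T.map (Int.castRingHom ℂ)) ≤
      ((p : ℝ) - 1) * T.natDegree * weilHeight (algebraMap (𝓞 K) K α) := by
    nlinarith
  have hD : 0 ≤ ((p : ℝ) - 1) * T.natDegree :=
    mul_nonneg (sub_nonneg.mpr (by exact_mod_cast hp.one_le)) (Nat.cast_nonneg _)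
  rcases hD.eq_or_lt with hD | hD
  · rw [← hD, div_zero]
    exact weilHeight_nonneg _
  · rwa [ge_iff_le, div_le_iff₀' hD]

/-- If `α` is a totally `p`-adic algebraic unit (every prime of `K = ℚ(α)` above `p` has
ramification index and residue degree `1`) and `T ∈ ℤ[x]` satisfies `T(α^{p-1}) ≠ 0`,
then `h(α) ≥ (ω_p(T) - ν_∞(T)) / ((p-1)·deg T)`. -/
theorem height_totally_padic_unit (p : ℕ) (hp : p.Prime) (α : 𝓞 K)
    (hgen : Algebra.adjoin ℚ {(algebraMap (𝓞 K) K α)} = ⊤)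
    (hunit : IsUnit α)
    (hsplit : ∀ v : HeightOneSpectrum (𝓞 K), v.asIdeal ∣ Ideal.span {(p : 𝓞 K)} →
      Ideal.absNorm v.asIdeal = p ∧ ¬ (v.asIdeal ^ 2 ∣ Ideal.span {(p : 𝓞 K)}))
    (T : Polynomial ℤ)
    (hT : (T.map (Int.castRingHom K)).eval ((algebraMap (𝓞 K) K α) ^ (p - 1)) ≠ 0) :
    weilHeight (algebraMap (𝓞 K) K α) ≥
      (omegap p T - nuC (T.map (Int.castRingHom ℂ))) / (((p : ℝ) - 1) * T.natDegree) :=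
  height_totally_padic_unit_general p hp α hunit hsplit T hT
end
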